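/- arXiv:1604.06393 — 11 statements merged into one kernel-verified Lean document; each statement's English description precedes it below -/
import Mathlib

section
/- Given a partial action α of a group G on a set X, the set 𝒢(G,X,α) = {(g,x) ∈ G × X : x ∈ X_{g⁻¹}}, with source s(g,x) = x, target t(g,x) = α_g(x), multiplication (g,x)(h,y) = (gh,y) defined when x = α_h(y), unit e(x) = (e,x), and inverse (g,x)⁻¹ = (g⁻¹, α_g(x)), is a groupoid. -/
/-- A partial action of a group `G` on a set `X`: subsets `dom g = X_g` and
bijections `act g : X_{g⁻¹} → X_g` (encoded as total maps that are bijective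
on the relevant domains) satisfying the axioms (i)-(iii). -/
structure PartialAction (G : Type*) [Group G] (X : Type*) where
  dom : G → Set X
  act : G → X → X
  bijOn : ∀ g : G, Set.BijOn (act g) (dom g⁻¹) (dom g)
  dom_one : dom (1 : G) = Set.univ
  act_one : ∀ x : X, act 1 x = x
  dom_comp : ∀ (g h : G) (x : X), x ∈ dom h⁻¹ → act h x ∈ dom g⁻¹ →
      x ∈ dom (g * h)⁻¹
  act_comp : ∀ (g h : G) (x : X), x ∈ dom h⁻¹ → act h x ∈ dom g⁻¹ →
      act g (act h x) = act (g * h) x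

namespace PartialAction

variable {G X : Type*} [Group G] (P : PartialAction G X)

/-- The arrows of `𝒢(G,X,α)`: pairs `(g,x)` with `x ∈ X_{g⁻¹}`. -/
def Arrow : Type _ := {p : G × X // p.2 ∈ P.dom p.1⁻¹}

/-- Source map: `s(g,x) = x`. -/
def src (γ : P.Arrow) : X := γ.1.2

/-- Target map: `t(g,x) = α_g(x)`. -/
def tgt (γ : P.Arrow) : X := P.act γ.1.1 γ.1.2

/-- Multiplication: `(g,x)(h,y) = (gh,y)` defined when `x = α_h(y)`. -/
def comp (γ δ : P.Arrow) (h : P.src γ = P.tgt δ) : P.Arrow :=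
  ⟨(γ.1.1 * δ.1.1, δ.1.2), P.dom_comp _ _ _ δ.2 (by
    have hx := γ.2
    rw [show γ.1.2 = P.src γ from rfl, h] at hx
    exact hx)⟩

/-- Unit map: `e(x) = (e,x)`. -/
def unitArrow (x : X) : P.Arrow :=
  ⟨((1 : G), x), by rw [inv_one, P.dom_one]; trivial⟩

/-- Inversion: `(g,x)⁻¹ = (g⁻¹, α_g(x))`. -/
def invArrow (γ : P.Arrow) : P.Arrow :=
  ⟨(γ.1.1⁻¹, P.act γ.1.1 γ.1.2), by rw [inv_inv]; exact (P.bijOn γ.1.1).mapsTo γ.2⟩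

end PartialAction


theorem act_inv_act {G X : Type*} [Group G] (P : PartialAction G X) (g : G) (x : X)
    (hx : x ∈ P.dom g⁻¹) : P.act g⁻¹ (P.act g x) = x := by
  have h2 : P.act g x ∈ P.dom (g⁻¹)⁻¹ := by
    rw [inv_inv]; exact (P.bijOn g).mapsTo hx
  rw [P.act_comp g⁻¹ g x hx h2, inv_mul_cancel, P.act_one]

/-- `𝒢(G,X,α)` with the given source, target, multiplication, units and
inverses is a groupoid. -/
theorem stmt4 {G X : Type*} [Group G] (P : PartialAction G X) :
    (∀ (γ δ : P.Arrow) (h : P.src γ = P.tgt δ),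
      P.src (P.comp γ δ h) = P.src δ ∧ P.tgt (P.comp γ δ h) = P.tgt γ) ∧
    (∀ (γ δ ε : P.Arrow) (h1 : P.src δ = P.tgt ε) (h2 : P.src γ = P.tgt δ)
      (h3 : P.src (P.comp γ δ h2) = P.tgt ε)
      (h4 : P.src γ = P.tgt (P.comp δ ε h1)),
      P.comp (P.comp γ δ h2) ε h3 = P.comp γ (P.comp δ ε h1) h4) ∧
    (∀ x : X, P.src (P.unitArrow x) = x ∧ P.tgt (P.unitArrow x) = x) ∧
    (∀ (γ : P.Arrow) (h : P.src γ = P.tgt (P.unitArrow (P.src γ))),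
      P.comp γ (P.unitArrow (P.src γ)) h = γ) ∧
    (∀ (γ : P.Arrow) (h : P.src (P.unitArrow (P.tgt γ)) = P.tgt γ),
      P.comp (P.unitArrow (P.tgt γ)) γ h = γ) ∧
    (∀ γ : P.Arrow, P.src (P.invArrow γ) = P.tgt γ ∧ P.tgt (P.invArrow γ) = P.src γ) ∧
    (∀ (γ : P.Arrow) (h : P.src γ = P.tgt (P.invArrow γ)),
      P.comp γ (P.invArrow γ) h = P.unitArrow (P.tgt γ)) ∧
    (∀ (γ : P.Arrow) (h : P.src (P.invArrow γ) = P.tgt γ),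
      P.comp (P.invArrow γ) γ h = P.unitArrow (P.src γ)) := by
  constructor
  · intro γ δ h
    refine ⟨rfl, ?_⟩
    have hmem : P.act δ.1.1 δ.1.2 ∈ P.dom γ.1.1⁻¹ := by
      have := γ.2; rwa [show γ.1.2 = P.src γ from rfl, h] at this
    show P.act (γ.1.1 * δ.1.1) δ.1.2 = P.tgt γ
    rw [← P.act_comp γ.1.1 δ.1.1 δ.1.2 δ.2 hmem]
    show P.act γ.1.1 (P.tgt δ) = P.tgt γ
    rw [← h]; rfl
  refine ⟨?_, ?_, ?_, ?_, ?_, ?_, ?_⟩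
  · intro γ δ ε h1 h2 h3 h4
    apply Subtype.ext
    show (γ.1.1 * δ.1.1 * ε.1.1, ε.1.2) = (γ.1.1 * (δ.1.1 * ε.1.1), ε.1.2)
    rw [mul_assoc]
  · intro x; exact ⟨rfl, P.act_one x⟩
  · intro γ h
    apply Subtype.ext
    show (γ.1.1 * 1, γ.1.2) = γ.1
    rw [mul_one]
  · intro γ h
    apply Subtype.ext
    show (1 * γ.1.1, γ.1.2) = γ.1
    rw [one_mul]
  · intro γ
    exact ⟨rfl, act_inv_act P γ.1.1 γ.1.2 γ.2⟩
  · intro γ h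
    apply Subtype.ext
    show (γ.1.1 * γ.1.1⁻¹, P.act γ.1.1 γ.1.2) = (1, P.tgt γ)
    rw [mul_inv_cancel]; rfl
  · intro γ h
    apply Subtype.ext
    show (γ.1.1⁻¹ * γ.1.1, γ.1.2) = (1, P.src γ)
    rw [inv_mul_cancel]; rfl
end

section
/- Let F : 𝒢 → G be a star-injective functor from a groupoid 𝒢 to a group G (viewed as a one-object groupoid). For g ∈ G, set X_g = {x ∈ 𝒢⁽⁰⁾ : ∃ γ ∈ 𝒢, s(γ) = x, F(γ) = g⁻¹} and define α_g : X_{g⁻¹} → X_g by α_g(x) = t(γ) where s(γ) = x and F(γ) = g. Then α_g is well-defined and ({X_g}, {α_g}) is a partial action of G on the object set 𝒢⁽⁰⁾. -/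
/-- A groupoid (given by its arrow set `Arr`, object set `Obj`, source, target,
partially defined composition, units and inverses) together with a functor `F`
into a group `G` viewed as a one-object groupoid. -/
structure GrpdOver (G : Type*) [Group G] where
  Obj : Type*
  Arr : Type*
  s : Arr → Obj
  t : Arr → Obj
  comp : (γ δ : Arr) → s γ = t δ → Arr
  unit : Obj → Arr
  inv : Arr → Arr
  s_comp : ∀ (γ δ : Arr) (h : s γ = t δ), s (comp γ δ h) = s δ
  t_comp : ∀ (γ δ : Arr) (h : s γ = t δ), t (comp γ δ h) = t γ
  s_unit : ∀ x : Obj, s (unit x) = x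
  t_unit : ∀ x : Obj, t (unit x) = x
  s_inv : ∀ γ : Arr, s (inv γ) = t γ
  t_inv : ∀ γ : Arr, t (inv γ) = s γ
  assoc : ∀ (γ δ ε : Arr) (h1 : s δ = t ε) (h2 : s γ = t δ)
      (h3 : s (comp γ δ h2) = t ε) (h4 : s γ = t (comp δ ε h1)),
      comp (comp γ δ h2) ε h3 = comp γ (comp δ ε h1) h4
  comp_unit : ∀ (γ : Arr) (h : s γ = t (unit (s γ))), comp γ (unit (s γ)) h = γ
  unit_comp : ∀ (γ : Arr) (h : s (unit (t γ)) = t γ), comp (unit (t γ)) γ h = γ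
  comp_inv : ∀ (γ : Arr) (h : s γ = t (inv γ)), comp γ (inv γ) h = unit (t γ)
  inv_comp : ∀ (γ : Arr) (h : s (inv γ) = t γ), comp (inv γ) γ h = unit (s γ)
  F : Arr → G
  F_comp : ∀ (γ δ : Arr) (h : s γ = t δ), F (comp γ δ h) = F γ * F δ
  F_unit : ∀ x : Obj, F (unit x) = 1

/-- The functor `F` is star injective. -/
def GrpdOver.StarInjective {G : Type*} [Group G] (Q : GrpdOver G) : Prop :=
  ∀ γ δ : Q.Arr, Q.s γ = Q.s δ → Q.F γ = Q.F δ → γ = δ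

/-- The functor `F` is star surjective. -/
def GrpdOver.StarSurjective {G : Type*} [Group G] (Q : GrpdOver G) : Prop :=
  ∀ (x : Q.Obj) (g : G), ∃ γ : Q.Arr, Q.s γ = x ∧ Q.F γ = g

open Classical in
noncomputable def GrpdOver.actF {G : Type*} [Group G] (Q : GrpdOver G) (g : G) (x : Q.Obj) : Q.Obj :=
  if h : ∃ γ : Q.Arr, Q.s γ = x ∧ Q.F γ = g then Q.t h.choose else x

theorem GrpdOver.actF_eq {G : Type*} [Group G] (Q : GrpdOver G) (hinj : Q.StarInjective)
    {g : G} {x : Q.Obj} {γ : Q.Arr} (h1 : Q.s γ = x) (h2 : Q.F γ = g) :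
    Q.actF g x = Q.t γ := by
  have hex : ∃ δ : Q.Arr, Q.s δ = x ∧ Q.F δ = g := ⟨γ, h1, h2⟩
  rw [GrpdOver.actF, dif_pos hex,
    hinj hex.choose γ (hex.choose_spec.1.trans h1.symm) (hex.choose_spec.2.trans h2.symm)]

theorem GrpdOver.F_inv' {G : Type*} [Group G] (Q : GrpdOver G) (γ : Q.Arr) :
    Q.F (Q.inv γ) = (Q.F γ)⁻¹ := by
  have h : Q.s γ = Q.t (Q.inv γ) := (Q.t_inv γ).symm
  have := Q.F_comp γ (Q.inv γ) h
  rw [Q.comp_inv γ h, Q.F_unit] at this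
  exact eq_inv_of_mul_eq_one_right this.symm

/-- From a star-injective functor `F : 𝒢 → G` one obtains a well-defined
partial action of `G` on the object set of `𝒢`, with domains
`X_g = {x : ∃ γ, s(γ) = x, F(γ) = g⁻¹}` and `α_g(x) = t(γ)` where
`s(γ) = x`, `F(γ) = g`. -/
theorem stmt5 {G : Type*} [Group G] (Q : GrpdOver G) (hinj : Q.StarInjective) :
    ∃ P : PartialAction G Q.Obj,
      (∀ g : G, P.dom g = {x : Q.Obj | ∃ γ : Q.Arr, Q.s γ = x ∧ Q.F γ = g⁻¹}) ∧
      (∀ (g : G) (γ : Q.Arr) (x : Q.Obj), Q.s γ = x → Q.F γ = g →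
        x ∈ P.dom g⁻¹ → P.act g x = Q.t γ) := by
  refine ⟨{
    dom := fun g => {x : Q.Obj | ∃ γ : Q.Arr, Q.s γ = x ∧ Q.F γ = g⁻¹}
    act := Q.actF
    bijOn := ?_
    dom_one := ?_
    act_one := ?_
    dom_comp := ?_
    act_comp := ?_ }, fun _ => rfl, ?_⟩
  · intro g
    refine ⟨?_, ?_, ?_⟩
    · rintro x ⟨γ, h1, h2⟩
      rw [inv_inv] at h2
      rw [Q.actF_eq hinj h1 h2]
      exact ⟨Q.inv γ, Q.s_inv γ, by rw [Q.F_inv', h2]⟩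
    · rintro x ⟨γ, h1, h2⟩ y ⟨δ, h3, h4⟩ hxy
      rw [inv_inv] at h2 h4
      rw [Q.actF_eq hinj h1 h2, Q.actF_eq hinj h3 h4] at hxy
      have hs : Q.s (Q.inv γ) = Q.s (Q.inv δ) := by rw [Q.s_inv, Q.s_inv, hxy]
      have hF : Q.F (Q.inv γ) = Q.F (Q.inv δ) := by rw [Q.F_inv', Q.F_inv', h2, h4]
      have := hinj _ _ hs hF
      have hgd : γ = δ := hinj γ δ (by rw [← Q.t_inv γ, ← Q.t_inv δ, this]) (by rw [h2, h4])
      rw [← h1, ← h3, hgd]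
    · rintro y ⟨γ, h1, h2⟩
      refine ⟨Q.t γ, ⟨Q.inv γ, Q.s_inv γ, by rw [Q.F_inv', h2, inv_inv]⟩, ?_⟩
      rw [Q.actF_eq hinj (Q.s_inv γ) (by rw [Q.F_inv', h2, inv_inv]), Q.t_inv, h1]
  · ext x
    simp only [Set.mem_setOf_eq, Set.mem_univ, iff_true]
    exact ⟨Q.unit x, Q.s_unit x, by rw [Q.F_unit, inv_one]⟩
  · intro x
    rw [Q.actF_eq hinj (Q.s_unit x) (Q.F_unit x), Q.t_unit]
  · rintro g h x ⟨γ, h1, h2⟩ ⟨δ, h3, h4⟩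
    rw [inv_inv] at h2 h4
    rw [Q.actF_eq hinj h1 h2] at h3
    have hc : Q.s δ = Q.t γ := h3
    refine ⟨Q.comp δ γ hc, by rw [Q.s_comp, h1], ?_⟩
    rw [Q.F_comp, h2, h4, inv_inv]
  · rintro g h x ⟨γ, h1, h2⟩ hmem
    rw [inv_inv] at h2
    rw [Q.actF_eq hinj h1 h2] at hmem ⊢
    obtain ⟨δ, h3, h4⟩ := hmem
    rw [inv_inv] at h4
    have hc : Q.s δ = Q.t γ := h3
    rw [Q.actF_eq hinj h3 h4,
      Q.actF_eq hinj (x := x) (γ := Q.comp δ γ hc) (by rw [Q.s_comp, h1])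
        (by rw [Q.F_comp, h2, h4]), Q.t_comp]
  · intro g γ x h1 h2 hmem
    exact Q.actF_eq hinj h1 h2
end

section
/- Let F : 𝒢 → G be a star-injective functor from a groupoid to a group. The induced partial action of G on 𝒢⁽⁰⁾ is global if and only if F is star surjective. -/
/-- The partial action induced by a star-injective functor `F : 𝒢 → G` is
global if and only if `F` is star surjective. -/
theorem stmt6 {G : Type*} [Group G] (Q : GrpdOver G) (hinj : Q.StarInjective)
    (P : PartialAction G Q.Obj)
    (hdom : ∀ g : G, P.dom g = {x : Q.Obj | ∃ γ : Q.Arr, Q.s γ = x ∧ Q.F γ = g⁻¹})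
    (hact : ∀ (g : G) (γ : Q.Arr) (x : Q.Obj), Q.s γ = x → Q.F γ = g →
      x ∈ P.dom g⁻¹ → P.act g x = Q.t γ) :
    (∀ g : G, P.dom g = Set.univ) ↔ Q.StarSurjective := by
  constructor
  · intro h x g
    have : x ∈ P.dom g⁻¹ := by rw [h]; trivial
    rw [hdom] at this
    obtain ⟨γ, h1, h2⟩ := this
    exact ⟨γ, h1, by simpa using h2⟩
  · intro h g
    ext x
    simp only [hdom, Set.mem_setOf_eq, Set.mem_univ, iff_true]
    exact h x g⁻¹
end

section
/- Let α be a unital partial action of a group G on a unital algebra A (so each ideal A_g = 1_g A for a central idempotent 1_g, and α_g : A_{g⁻¹} → A_g is a unital algebra isomorphism). Then the partial skew group algebra A ⋊_α G = ⊕_{g∈G} A_g δ_g with multiplication (a_g δ_g)(b_h δ_h) = a_g α_g(b_h 1_{g⁻¹}) δ_{gh} is an associative unital algebra with unit 1_A δ_e. -/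
/-- A unital partial action of a group `G` on a unital `k`-algebra `A`:
each domain `A_g = e g * A` is an ideal generated by a central idempotent
`e g`, with `k`-linear unital algebra isomorphisms
`act g : A_{g⁻¹} → A_g` (encoded as total linear maps, constrained on the
ideals) satisfying the partial action axioms. -/
structure UnitalPartialAction (G : Type*) [Group G] (k : Type*) [CommRing k]
    (A : Type*) [Ring A] [Algebra k A] where
  e : G → A
  act : G → A →ₗ[k] A
  e_idem : ∀ g : G, e g * e g = e g
  e_central : ∀ (g : G) (a : A), e g * a = a * e g
  e_one : e 1 = 1
  act_one : ∀ a : A, act 1 a = a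
  mem_act : ∀ (g : G) (a : A), e g⁻¹ * a = a → e g * act g a = act g a
  act_unit : ∀ g : G, act g (e g⁻¹) = e g
  act_mul : ∀ (g : G) (a b : A), e g⁻¹ * a = a → e g⁻¹ * b = b →
      act g (a * b) = act g a * act g b
  act_inv : ∀ (g : G) (a : A), e g⁻¹ * a = a → act g⁻¹ (act g a) = a
  dom_comp : ∀ (g h : G) (a : A), e h⁻¹ * a = a → e g⁻¹ * act h a = act h a →
      e (g * h)⁻¹ * a = a
  act_comp : ∀ (g h : G) (a : A), e h⁻¹ * a = a → e g⁻¹ * act h a = act h a →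
      act g (act h a) = act (g * h) a

variable {G : Type*} [Group G] {k : Type*} [CommRing k]
  {A : Type*} [Ring A] [Algebra k A]

/-- The multiplication of the partial skew group algebra
`A ⋊_α G = ⊕_{g ∈ G} A_g δ_g`, encoded on finitely supported functions
`G →₀ A`: `(a_g δ_g)(b_h δ_h) = a_g α_g(b_h 1_{g⁻¹}) δ_{gh}`. -/
noncomputable def skewMul (α : UnitalPartialAction G k A) (f f' : G →₀ A) : G →₀ A :=
  f.sum fun g a => f'.sum fun h b => Finsupp.single (g * h) (a * α.act g (α.e g⁻¹ * b))

/-- Membership in `⊕_{g ∈ G} A_g δ_g`: the `g`-th coefficient lies in the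
ideal `A_g = e g * A`. -/
def memSkew (α : UnitalPartialAction G k A) (f : G →₀ A) : Prop :=
  ∀ g : G, α.e g * f g = f g

/-!
Let `θ_g a = α_g(1_{g⁻¹} a)` (`fullAct`); this extends `α_g` to a multiplicative map `A → A_g`,
and the product of monomials is `(a δ_g)(b δ_h) = a θ_g(b) δ_{gh}`. The partial-action axioms
say that `θ_g(1_s) = 1_g 1_{gs}` and, consequently, `θ_g ∘ θ_h = 1_g θ_{gh}`. Associativity on
monomials is then the identity
`θ_g(b) θ_{gh}(c) = θ_g(b) 1_g θ_{gh}(c) = θ_g(b) θ_g(θ_h c) = θ_g(b θ_h(c))`,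
and it extends to all of `A ⋊_α G` by bi-additivity.
-/

namespace UnitalPartialAction

variable (α : UnitalPartialAction G k A)

lemma e_mul_e_mul (g : G) (c : A) : α.e g * (α.e g * c) = α.e g * c := by
  rw [← mul_assoc, α.e_idem]

lemma e_mul_e_mul_of_e_mul (g h : G) {c : A} (hc : α.e h * c = c) :
    α.e h * (α.e g * c) = α.e g * c := by
  rw [← mul_assoc, α.e_central h (α.e g), mul_assoc, hc]

lemma e_mul_mul_e_mul (g : G) (b c : A) :
    (α.e g * b) * (α.e g * c) = α.e g * (b * c) := by
  rw [mul_assoc, ← mul_assoc b, ← α.e_central, ← mul_assoc, ← mul_assoc, α.e_idem, mul_assoc]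

lemma act_act_inv (g : G) {a : A} (h : α.e g * a = a) : α.act g (α.act g⁻¹ a) = a := by
  simpa using α.act_inv g⁻¹ a (by rwa [inv_inv])

lemma e_mul_act_of_e_mul (g s : G) {x : A} (hg : α.e g⁻¹ * x = x) (hs : α.e s * x = x) :
    α.e (g * s) * α.act g x = α.act g x := by
  simpa using α.dom_comp s⁻¹ g⁻¹ (α.act g x) (by simpa using α.mem_act g x hg)
    (by rwa [inv_inv, α.act_inv g x hg])

def fullAct (g : G) (a : A) : A :=
  α.act g (α.e g⁻¹ * a)

lemma fullAct_of_e_mul (g : G) {a : A} (ha : α.e g⁻¹ * a = a) : α.fullAct g a = α.act g a := by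
  rw [fullAct, ha]

lemma e_mul_fullAct (g : G) (a : A) : α.e g * α.fullAct g a = α.fullAct g a :=
  α.mem_act g _ (α.e_mul_e_mul g⁻¹ a)

lemma fullAct_one_left (a : A) : α.fullAct 1 a = a := by
  rw [fullAct, inv_one, α.e_one, one_mul, α.act_one]

lemma fullAct_one (g : G) : α.fullAct g 1 = α.e g := by
  rw [fullAct, mul_one, α.act_unit]

lemma fullAct_mul (g : G) (a b : A) :
    α.fullAct g (a * b) = α.fullAct g a * α.fullAct g b := by
  rw [fullAct, ← α.e_mul_mul_e_mul, α.act_mul g _ _ (α.e_mul_e_mul _ a) (α.e_mul_e_mul _ b)]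
  rfl

/-- The idempotent form of the axiom `α_g(A_{g⁻¹} ∩ A_s) = A_g ∩ A_{gs}`. -/
lemma fullAct_e (g s : G) : α.fullAct g (α.e s) = α.e g * α.e (g * s) := by
  set a := α.e g * α.e (g * s)
  have hag : α.e g * a = a := α.e_mul_e_mul g _
  have hags : α.e (g * s) * a = a := α.e_mul_e_mul_of_e_mul g (g * s) (α.e_idem _)
  set v := α.act g⁻¹ a
  have hvg : α.e g⁻¹ * v = v := α.mem_act g⁻¹ a (by rwa [inv_inv])
  have hvs : α.e s * v = v := by
    simpa using α.e_mul_act_of_e_mul g⁻¹ (g * s) (by rwa [inv_inv]) hags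
  have hv : α.fullAct g v = a := by rw [α.fullAct_of_e_mul g hvg, α.act_act_inv g hag]
  set u := α.fullAct g (α.e s)
  have hug : α.e g * u = u := α.e_mul_fullAct g _
  have hugs : α.e (g * s) * u = u :=
    α.e_mul_act_of_e_mul g s (α.e_mul_e_mul _ _) (α.e_mul_e_mul_of_e_mul g⁻¹ s (α.e_idem s))
  calc u = u * (α.e g * α.e (g * s)) := by
        rw [← mul_assoc, ← α.e_central g u, hug, ← α.e_central (g * s) u, hugs]
    _ = α.fullAct g (α.e s * v) := by rw [α.fullAct_mul, hv]
    _ = a := by rw [hvs, hv]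

lemma fullAct_e_mul (g s : G) (a : A) :
    α.fullAct g (α.e s * a) = α.e (g * s) * α.fullAct g a := by
  rw [α.fullAct_mul, α.fullAct_e, ← α.e_central (g * s), mul_assoc, α.e_mul_fullAct]

lemma fullAct_fullAct (g h : G) (c : A) :
    α.fullAct g (α.fullAct h c) = α.e g * α.fullAct (g * h) c := by
  set z := α.e (g * h)⁻¹ * (α.e h⁻¹ * c)
  have hzh : α.e h⁻¹ * z = z := α.e_mul_e_mul_of_e_mul _ _ (α.e_mul_e_mul _ c)
  have hactz : α.act h z = α.e g⁻¹ * α.fullAct h c := by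
    rw [← α.fullAct_of_e_mul h hzh, α.fullAct_e_mul, α.fullAct_e_mul, mul_inv_cancel, α.e_one,
      one_mul, mul_inv_rev, mul_inv_cancel_left]
  calc α.fullAct g (α.fullAct h c) = α.act g (α.act h z) := by rw [hactz]; rfl
    _ = α.fullAct (g * h) (α.e h⁻¹ * c) := by
        rw [α.act_comp g h z hzh (by rw [hactz, α.e_mul_e_mul])]; rfl
    _ = α.e g * α.fullAct (g * h) c := by rw [α.fullAct_e_mul, mul_inv_cancel_right]

lemma fullAct_mul_fullAct_mul (g h : G) (b c : A) :
    α.fullAct g b * α.fullAct (g * h) c = α.fullAct g (b * α.fullAct h c) := by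
  rw [α.fullAct_mul, α.fullAct_fullAct, ← mul_assoc, ← α.e_central, α.e_mul_fullAct]

lemma e_mul_mul_fullAct (g h : G) (a : A) {b : A} (hb : α.e h * b = b) :
    α.e (g * h) * (a * α.fullAct g b) = a * α.fullAct g b := by
  rw [← hb, α.fullAct_e_mul, ← mul_assoc, α.e_central (g * h) a, mul_assoc, α.e_mul_e_mul]

lemma single_skewMul_single (g h : G) (a b : A) :
    skewMul α (Finsupp.single g a) (Finsupp.single h b) =
      Finsupp.single (g * h) (a * α.fullAct g b) := by
  rw [skewMul, Finsupp.sum_single_index (by simp), Finsupp.sum_single_index (by simp)]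
  rfl

lemma skewMul_zero (f : G →₀ A) : skewMul α f 0 = 0 := by
  simp [skewMul]

lemma zero_skewMul (f : G →₀ A) : skewMul α 0 f = 0 := by
  simp [skewMul]

lemma skewMul_add (f f₁ f₂ : G →₀ A) :
    skewMul α f (f₁ + f₂) = skewMul α f f₁ + skewMul α f f₂ := by
  rw [skewMul, skewMul, skewMul, ← Finsupp.sum_add]
  refine Finsupp.sum_congr fun g _ => Finsupp.sum_add_index' (fun h => by simp) fun h b₁ b₂ => ?_
  simp [mul_add, Finsupp.single_add]

lemma add_skewMul (f₁ f₂ f : G →₀ A) :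
    skewMul α (f₁ + f₂) f = skewMul α f₁ f + skewMul α f₂ f :=
  Finsupp.sum_add_index' (fun g => by simp)
    fun g a₁ a₂ => by simp [add_mul, Finsupp.single_add, Finsupp.sum_add]

lemma skewMul_assoc (f f' f'' : G →₀ A) :
    skewMul α (skewMul α f f') f'' = skewMul α f (skewMul α f' f'') := by
  induction f using Finsupp.induction_linear with
  | zero => simp only [zero_skewMul]
  | add f₁ f₂ h₁ h₂ => simp only [add_skewMul, h₁, h₂]
  | single g a =>
  induction f' using Finsupp.induction_linear with
  | zero => simp only [skewMul_zero, zero_skewMul]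
  | add f₁ f₂ h₁ h₂ => simp only [skewMul_add, add_skewMul, h₁, h₂]
  | single h b =>
  induction f'' using Finsupp.induction_linear with
  | zero => simp only [skewMul_zero]
  | add f₁ f₂ h₁ h₂ => simp only [skewMul_add, h₁, h₂]
  | single l c =>
  simp only [single_skewMul_single, mul_assoc, fullAct_mul_fullAct_mul]

lemma one_skewMul (f : G →₀ A) : skewMul α (Finsupp.single 1 1) f = f := by
  rw [skewMul, Finsupp.sum_single_index (by simp)]
  refine (Finsupp.sum_congr fun h _ => ?_).trans (Finsupp.sum_single f)
  exact congrArg₂ Finsupp.single (one_mul h) ((one_mul _).trans (α.fullAct_one_left _))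

lemma skewMul_one (f : G →₀ A) (hf : memSkew α f) : skewMul α f (Finsupp.single 1 1) = f := by
  refine (Finsupp.sum_congr fun g _ => ?_).trans (Finsupp.sum_single f)
  rw [Finsupp.sum_single_index (by simp), mul_one g]
  change Finsupp.single g (f g * α.fullAct g 1) = _
  rw [fullAct_one, ← α.e_central, hf g]

lemma memSkew_single_one : memSkew α (Finsupp.single 1 1) := by
  intro g
  rcases eq_or_ne g 1 with rfl | hg
  · rw [α.e_one, one_mul]
  · rw [Finsupp.single_eq_of_ne hg, mul_zero]

lemma memSkew_skewMul {f f' : G →₀ A} (hf' : memSkew α f') : memSkew α (skewMul α f f') := by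
  classical
  intro p
  simp only [skewMul, Finsupp.sum_apply, Finsupp.mul_sum, Finsupp.single_apply]
  refine Finsupp.sum_congr fun g _ => Finsupp.sum_congr fun h _ => ?_
  split_ifs with hp
  · subst hp
    exact α.e_mul_mul_fullAct g h (f g) (hf' h)
  · rw [mul_zero]

end UnitalPartialAction

/-- The partial skew group algebra of a unital partial action is an
associative unital algebra with unit `1_A δ_e`. -/
theorem stmt8 (α : UnitalPartialAction G k A) :
    (∀ f f', memSkew α f → memSkew α f' → memSkew α (skewMul α f f')) ∧
    (∀ f f' f'', memSkew α f → memSkew α f' → memSkew α f'' →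
      skewMul α (skewMul α f f') f'' = skewMul α f (skewMul α f' f'')) ∧
    (memSkew α (Finsupp.single (1 : G) (1 : A))) ∧
    (∀ f, memSkew α f →
      skewMul α (Finsupp.single (1 : G) (1 : A)) f = f ∧
      skewMul α f (Finsupp.single (1 : G) (1 : A)) = f) ∧
    (∀ f f₁ f₂, skewMul α f (f₁ + f₂) = skewMul α f f₁ + skewMul α f f₂) ∧
    (∀ f f₁ f₂, skewMul α (f₁ + f₂) f = skewMul α f₁ f + skewMul α f₂ f) := by
  refine ⟨fun f f' _ hf' => α.memSkew_skewMul hf', fun f f' f'' _ _ _ => α.skewMul_assoc f f' f'',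
    α.memSkew_single_one, fun f hf => ⟨α.one_skewMul f, α.skewMul_one f hf⟩, α.skewMul_add,
    fun f f₁ f₂ => α.add_skewMul f₁ f₂ f⟩
end

section
/- Let α be a partial action of a finite group G on a finite set X, and let θ be the induced partial action of G on A = Fun(X,k) given by (θ_g f)(x) = f(α_{g⁻¹}(x)) for f supported on X_{g⁻¹} and x ∈ X_g. Then the groupoid algebra k𝒢(G,X,α) is isomorphic as a k-algebra to the partial skew group algebra Fun(X,k) ⋊_θ G, via Φ(a δ_g) = Σ_{x ∈ X_g} a(x) δ_{(x,g)} with inverse Ψ(δ_{(x,g)}) = χ_x δ_g. -/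
variable {G X k : Type*} [Group G] [Fintype G] [Fintype X] [CommRing k]

open scoped Classical

/-- The multiplication of the groupoid algebra `k𝒢(G,X,α)`, where
`𝒢(G,X,α) = {(x,g) : x ∈ X_g}` and
`δ_{(x,g)}·δ_{(y,h)} = δ_{(x,gh)}` if `α_{g⁻¹}(x) = y` and `0` otherwise;
elements are encoded as functions `X × G → k` supported on the arrow set. -/
noncomputable def groupoidAlgMul (P : PartialAction G X) (u v : X × G → k) :
    X × G → k := fun p =>
  ∑ q : X × G, ∑ r : X × G,
    if q.1 = p.1 ∧ q.2 * r.2 = p.2 ∧ q.1 ∈ P.dom q.2 ∧ r.1 ∈ P.dom r.2 ∧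
        P.act q.2⁻¹ q.1 = r.1
    then u q * v r else 0

/-- The induced partial action `θ` of `G` on `A = Fun(X,k)`:
`(θ_g f)(x) = f(α_{g⁻¹}(x))` for `x ∈ X_g`, and `0` outside `X_g`. -/
noncomputable def thetaAct (P : PartialAction G X) (g : G) (f : X → k) : X → k :=
  fun x => if x ∈ P.dom g then f (P.act g⁻¹ x) else 0

/-- The multiplication of the partial skew group algebra
`Fun(X,k) ⋊_θ G = ⊕_g A_g δ_g`, `(a δ_g)(b δ_h) = θ_g(θ_{g⁻¹}(a)b) δ_{gh}`;
elements are encoded as functions `G → (X → k)` with `F g` supported on `X_g`. -/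
noncomputable def skewAlgMul (P : PartialAction G X) (F F' : G → X → k) :
    G → X → k := fun g x =>
  ∑ g₁ : G, ∑ g₂ : G,
    if g₁ * g₂ = g
    then thetaAct P g₁ (fun y => thetaAct P g₁⁻¹ (F g₁) y * F' g₂ y) x else 0

/-- `Φ(a δ_g) = Σ_{x ∈ X_g} a(x) δ_{(x,g)}`. -/
noncomputable def skewToGroupoid (P : PartialAction G X) (F : G → X → k) :
    X × G → k := fun p => if p.1 ∈ P.dom p.2 then F p.2 p.1 else 0

/-- `Ψ(δ_{(x,g)}) = χ_x δ_g`. -/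
noncomputable def groupoidToSkew (P : PartialAction G X) (u : X × G → k) :
    G → X → k := fun g x => if x ∈ P.dom g then u (x, g) else 0

omit [Fintype G] [Fintype X] in
lemma PA_mem_dom_inv (P : PartialAction G X) {g : G} {x : X} (hx : x ∈ P.dom g) :
    P.act g⁻¹ x ∈ P.dom g⁻¹ := by
  have := (P.bijOn g⁻¹).mapsTo
  rw [inv_inv] at this
  exact this hx

omit [Fintype G] [Fintype X] in
lemma PA_act_act_inv (P : PartialAction G X) {g : G} {x : X} (hx : x ∈ P.dom g) :
    P.act g (P.act g⁻¹ x) = x := by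
  have h := P.act_comp g g⁻¹ x (by simpa using hx) (PA_mem_dom_inv P hx)
  rw [mul_inv_cancel] at h
  rw [h, P.act_one]

omit [Fintype G] [Fintype X] in
lemma PA_mem_dom_mul (P : PartialAction G X) {g₁ g₂ : G} {x : X}
    (h1 : x ∈ P.dom g₁) (h2 : P.act g₁⁻¹ x ∈ P.dom g₂) : x ∈ P.dom (g₁ * g₂) := by
  have := P.dom_comp g₂⁻¹ g₁⁻¹ x (by simpa using h1) (by simpa using h2)
  simpa [mul_inv_rev] using this

/-- For a partial action of a finite group on a finite set, the groupoid
algebra `k𝒢(G,X,α)` is isomorphic as a `k`-algebra to the partial skew group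
algebra `Fun(X,k) ⋊_θ G`, via `Φ` with inverse `Ψ`. -/
theorem stmt9 (P : PartialAction G X) :
    (∀ F : G → X → k, (∀ (g : G) (x : X), x ∉ P.dom g → F g x = 0) →
      groupoidToSkew P (skewToGroupoid P F) = F) ∧
    (∀ u : X × G → k, (∀ p : X × G, p.1 ∉ P.dom p.2 → u p = 0) →
      skewToGroupoid P (groupoidToSkew P u) = u) ∧
    (∀ F F' : G → X → k, skewToGroupoid P F + skewToGroupoid P F' =
      skewToGroupoid P (F + F')) ∧
    (∀ F F' : G → X → k, (∀ (g : G) (x : X), x ∉ P.dom g → F g x = 0) →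
      (∀ (g : G) (x : X), x ∉ P.dom g → F' g x = 0) →
      skewToGroupoid P (skewAlgMul P F F') =
        groupoidAlgMul P (skewToGroupoid P F) (skewToGroupoid P F')) := by
  refine ⟨?_, ?_, ?_, ?_⟩
  · intro F hF
    funext g x
    simp only [groupoidToSkew, skewToGroupoid]
    by_cases h : x ∈ P.dom g
    · simp [h]
    · simp [h, hF g x h]
  · intro u hu
    funext p
    obtain ⟨x, g⟩ := p
    simp only [skewToGroupoid, groupoidToSkew]
    by_cases h : x ∈ P.dom g
    · simp [h]
    · simp [h, hu (x, g) h]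
  · intro F F'
    funext p
    simp only [Pi.add_apply, skewToGroupoid]
    split_ifs <;> simp
  · intro F F' hF hF'
    funext p
    obtain ⟨x, g⟩ := p
    show (if x ∈ P.dom g then skewAlgMul P F F' g x else 0) = _
    have collapse : groupoidAlgMul P (skewToGroupoid P F) (skewToGroupoid P F') (x, g)
        = ∑ g₁ : G, ∑ g₂ : G,
          if g₁ * g₂ = g ∧ x ∈ P.dom g₁ ∧ P.act g₁⁻¹ x ∈ P.dom g₂ then
            F g₁ x * F' g₂ (P.act g₁⁻¹ x) else 0 := by
      unfold groupoidAlgMul skewToGroupoid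
      rw [Fintype.sum_prod_type]
      rw [Finset.sum_eq_single x (fun y _ hy => by
        apply Finset.sum_eq_zero; intro g₁ _
        apply Finset.sum_eq_zero; intro r _
        exact if_neg fun hc => hy hc.1) (by simp)]
      refine Finset.sum_congr rfl fun g₁ _ => ?_
      rw [Fintype.sum_prod_type]
      rw [Finset.sum_eq_single (P.act g₁⁻¹ x) (fun z _ hz => by
        apply Finset.sum_eq_zero; intro g₂ _
        exact if_neg fun hc => hz hc.2.2.2.2.symm) (by simp)]
      refine Finset.sum_congr rfl fun g₂ _ => ?_
      by_cases hc : g₁ * g₂ = g ∧ x ∈ P.dom g₁ ∧ P.act g₁⁻¹ x ∈ P.dom g₂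
      · obtain ⟨h1, h2, h3⟩ := hc
        simp [h1, h2, h3]
      · rw [if_neg fun hc' => hc ⟨hc'.2.1, hc'.2.2.1, hc'.2.2.2.1⟩, if_neg hc]
    by_cases hg : x ∈ P.dom g
    · rw [if_pos hg, collapse]
      simp only [skewAlgMul, thetaAct]
      refine Finset.sum_congr rfl fun g₁ _ => Finset.sum_congr rfl fun g₂ _ => ?_
      by_cases h1 : g₁ * g₂ = g
      · rw [if_pos h1]
        by_cases h2 : x ∈ P.dom g₁
        · rw [if_pos h2]
          have hmem : P.act g₁⁻¹ x ∈ P.dom g₁⁻¹ := PA_mem_dom_inv P h2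
          rw [if_pos hmem, inv_inv, PA_act_act_inv P h2]
          by_cases h3 : P.act g₁⁻¹ x ∈ P.dom g₂
          · rw [if_pos ⟨h1, h2, h3⟩]
          · rw [if_neg fun hc => h3 hc.2.2, hF' g₂ _ h3, mul_zero]
        · rw [if_neg h2, if_neg fun hc => h2 hc.2.1]
      · rw [if_neg h1, if_neg fun hc => h1 hc.1]
    · rw [if_neg hg, collapse]
      symm
      apply Finset.sum_eq_zero; intro g₁ _
      apply Finset.sum_eq_zero; intro g₂ _
      rw [if_neg]
      rintro ⟨h1, h2, h3⟩
      exact hg (h1 ▸ PA_mem_dom_mul P h2 h3)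
end

section
/- A left partial H-module algebra A is a (global) left H-module algebra if and only if h·1_A = ε(h)1_A for all h ∈ H. -/
open TensorProduct

/-- A left partial `H`-module algebra over a bialgebra `H`: a bilinear action
`act : H ⊗ A → A` satisfying (PA1) `1·a = a`, (PA2) `h·(ab) = (h₁·a)(h₂·b)`,
and (PA3) `h·(g·a) = (h₁·1)(h₂g·a)` (Sweedler components are expressed via
the comultiplication). -/
structure PartialModuleAlgebra (k H A : Type*) [CommRing k] [Ring H]
    [Bialgebra k H] [Ring A] [Algebra k A] where
  act : H →ₗ[k] A →ₗ[k] A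
  pa1 : ∀ a : A, act 1 a = a
  pa2 : ∀ a b : A,
      (LinearMap.mul' k A ∘ₗ TensorProduct.map (act.flip a) (act.flip b) ∘ₗ
        (Coalgebra.comul (R := k) (A := H))) = act.flip (a * b)
  pa3 : ∀ (g : H) (a : A),
      act.flip (act g a) =
        LinearMap.mul' k A ∘ₗ
          TensorProduct.map (act.flip 1) (act.flip a ∘ₗ LinearMap.mulRight k g) ∘ₗ
            (Coalgebra.comul (R := k) (A := H))

/-- A left partial `H`-module algebra `A` is a (global) `H`-module algebra
(i.e. the action is associative, making `A` an `H`-module, with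
`h·1_A = ε(h)1_A`) if and only if `h·1_A = ε(h)1_A` for all `h ∈ H`. -/
theorem stmt12 {k H A : Type*} [CommRing k] [Ring H] [Bialgebra k H]
    [Ring A] [Algebra k A] (P : PartialModuleAlgebra k H A) :
    ((∀ (h g : H) (a : A), P.act (h * g) a = P.act h (P.act g a)) ∧
      (∀ h : H, P.act h (1 : A) = (Coalgebra.counit (R := k) h : k) • (1 : A))) ↔
    (∀ h : H, P.act h (1 : A) = (Coalgebra.counit (R := k) h : k) • (1 : A)) := by
  constructor
  · exact fun ⟨_, h2⟩ => h2
  · intro hcond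
    refine ⟨?_, hcond⟩
    intro h g a
    have h1 : P.act.flip (1:A) = (Algebra.linearMap k A) ∘ₗ Coalgebra.counit := by
      ext x; simp [hcond x, Algebra.smul_def]
    have e := LinearMap.congr_fun (P.pa3 g a) h
    simp only [LinearMap.flip_apply] at e
    rw [e, h1]
    have key : TensorProduct.map ((Algebra.linearMap k A) ∘ₗ Coalgebra.counit)
        (P.act.flip a ∘ₗ LinearMap.mulRight k g) =
        TensorProduct.map (Algebra.linearMap k A) (P.act.flip a ∘ₗ LinearMap.mulRight k g)
          ∘ₗ LinearMap.rTensor H (Coalgebra.counit (R := k) (A := H)) := by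
      apply TensorProduct.ext'
      intro x y
      simp
    simp only [LinearMap.comp_apply, key, Coalgebra.rTensor_counit_comul]
    simp [Algebra.smul_def]
end

section
/- Let H be a bialgebra, B a left H-module algebra with action ▷, and e ∈ B a central idempotent. Then the formula h·(eb) = e(h ▷ (eb)) defines a left partial action of H on the ideal A = eB (with unit e). -/
open TensorProduct

/-- The induced action `h·(eb) = e(h ▷ (eb))` on the ideal `A = eB`. -/
noncomputable def inducedPartialAct {k H B : Type*} [CommRing k] [Ring H]
    [Bialgebra k H] [Ring B] [Algebra k B]
    (ρ : H →ₗ[k] B →ₗ[k] B) (e : B) (a : B) : H →ₗ[k] B :=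
  LinearMap.mulLeft k e ∘ₗ ρ.flip a

/-- If `B` is a left `H`-module algebra and `e ∈ B` a central idempotent,
then `h·(eb) = e(h ▷ (eb))` defines a left partial action of `H` on the
ideal `A = eB` (with unit `e`):  the action takes values in `eB`, and
satisfies (PA1), (PA2) and (PA3). -/
theorem stmt13 {k H B : Type*} [CommRing k] [Ring H] [Bialgebra k H]
    [Ring B] [Algebra k B] (ρ : H →ₗ[k] B →ₗ[k] B)
    -- `ρ` is a (global) `H`-module algebra structure on `B`:
    (hone : ∀ b : B, ρ 1 b = b)
    (hassoc : ∀ (h g : H) (b : B), ρ (h * g) b = ρ h (ρ g b))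
    (hmul : ∀ a b : B,
      LinearMap.mul' k B ∘ₗ TensorProduct.map (ρ.flip a) (ρ.flip b) ∘ₗ
        (Coalgebra.comul (R := k) (A := H)) = ρ.flip (a * b))
    (hunit : ∀ h : H, ρ h (1 : B) = (Coalgebra.counit (R := k) h : k) • (1 : B))
    -- `e` is a central idempotent:
    (e : B) (he : e * e = e) (hce : ∀ b : B, e * b = b * e) :
    -- the induced maps land in `A = eB`:
    (∀ (a : B) (h : H), e * inducedPartialAct ρ e (e * a) h =
      inducedPartialAct ρ e (e * a) h) ∧
    -- (PA1):
    (∀ b : B, inducedPartialAct ρ e (e * b) 1 = e * b) ∧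
    -- (PA2):
    (∀ a b : B, inducedPartialAct ρ e ((e * a) * (e * b)) =
      LinearMap.mul' k B ∘ₗ
        TensorProduct.map (inducedPartialAct ρ e (e * a))
          (inducedPartialAct ρ e (e * b)) ∘ₗ
          (Coalgebra.comul (R := k) (A := H))) ∧
    -- (PA3), with `1_A = e`:
    (∀ (g : H) (a : B),
      inducedPartialAct ρ e (inducedPartialAct ρ e (e * a) g) =
        LinearMap.mul' k B ∘ₗ
          TensorProduct.map (inducedPartialAct ρ e e)
            (inducedPartialAct ρ e (e * a) ∘ₗ LinearMap.mulRight k g) ∘ₗ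
            (Coalgebra.comul (R := k) (A := H))) := by
  have key : LinearMap.mulLeft k e ∘ₗ LinearMap.mul' k B =
      LinearMap.mul' k B ∘ₗ
        TensorProduct.map (LinearMap.mulLeft k e) (LinearMap.mulLeft k e) := by
    apply TensorProduct.ext'
    intro x y
    simp only [LinearMap.comp_apply, TensorProduct.map_tmul, LinearMap.mul'_apply,
      LinearMap.mulLeft_apply]
    calc e * (x * y) = e * (e * x) * y := by simp only [← mul_assoc, he]
      _ = e * (x * e) * y := by rw [hce]; simp only [mul_assoc]
      _ = e * x * (e * y) := by simp only [mul_assoc]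
  refine ⟨?_, ?_, ?_, ?_⟩
  · intro a h
    simp only [inducedPartialAct, LinearMap.comp_apply, LinearMap.mulLeft_apply,
      LinearMap.flip_apply, ← mul_assoc, he]
  · intro b
    simp only [inducedPartialAct, LinearMap.comp_apply, LinearMap.mulLeft_apply,
      LinearMap.flip_apply, hone, ← mul_assoc, he]
  · intro a b
    show LinearMap.mulLeft k e ∘ₗ ρ.flip (e * a * (e * b)) = _
    rw [← hmul (e*a) (e*b)]
    unfold inducedPartialAct
    rw [TensorProduct.map_comp]
    simp only [← LinearMap.comp_assoc]
    rw [key]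
  · intro g a
    have hact : inducedPartialAct ρ e (e * a) g = e * ρ g (e * a) := rfl
    have hfl : ρ.flip (ρ g (e * a)) = ρ.flip (e * a) ∘ₗ LinearMap.mulRight k g := by
      ext h
      simp [hassoc]
    rw [hact]
    show LinearMap.mulLeft k e ∘ₗ ρ.flip (e * ρ g (e * a)) = _
    rw [← hmul e (ρ g (e * a)), hfl]
    unfold inducedPartialAct
    rw [TensorProduct.map_comp]
    simp only [← LinearMap.comp_assoc]
    rw [key]
    simp only [← TensorProduct.map_comp, LinearMap.comp_assoc]
end

section
/- Let G be a group and λ : kG → k a symmetric partial action of the group algebra kG on the base field k; write λ_g = λ(δ_g). Then the set H = {g ∈ G : λ_g = 1} is a subgroup of G, and λ_g ∈ {0,1} for all g, so λ is the indicator function of the subgroup H. Conversely, for any subgroup H ≤ G, the indicator function of H defines a symmetric partial action of kG on k. -/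
open scoped Classical

/-- Symmetric partial actions of the group algebra `kG` on the base field `k`
(functionals `λ` with `λ_e = 1`, `λ_g = λ_g²`, `λ_gλ_h = λ_{gh}λ_g = λ_gλ_{gh}`)
are exactly the indicator functions of subgroups `H ≤ G`. -/
theorem stmt14 {k G : Type*} [Field k] [Group G] (lam : G → k) :
    (lam 1 = 1 ∧
      (∀ g : G, lam g * lam g = lam g) ∧
      (∀ g h : G, lam g * lam h = lam (g * h) * lam g) ∧
      (∀ g h : G, lam g * lam h = lam g * lam (g * h))) ↔
    (∃ H : Subgroup G, ∀ g : G, lam g = if g ∈ H then 1 else 0) := by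
  constructor
  · rintro ⟨h1, hidem, hmul, _⟩
    have h01 : ∀ g, lam g = 0 ∨ lam g = 1 := by
      intro g
      have := hidem g
      rcases eq_or_ne (lam g) 0 with h | h
      · exact Or.inl h
      · right; field_simp at this; exact this
    refine ⟨{ carrier := {g | lam g = 1},
              one_mem' := h1,
              mul_mem' := ?_,
              inv_mem' := ?_ }, ?_⟩
    · intro a b ha hb
      have := hmul a b
      simp only [Set.mem_setOf_eq] at *
      rw [ha, hb] at this
      simpa using this.symm
    · intro a ha
      simp only [Set.mem_setOf_eq] at *
      have := hmul a a⁻¹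
      rw [ha, mul_inv_cancel, h1] at this
      simpa using this
    · intro g
      rcases h01 g with h | h
      · rw [h]
        rw [if_neg]
        intro hg
        simp only [Subgroup.mem_mk, Set.mem_setOf_eq] at hg
        rw [hg] at h; exact one_ne_zero h
      · rw [h]; exact (if_pos (show g ∈ _ from h)).symm
  · rintro ⟨H, hH⟩
    have key : ∀ g, lam g = if g ∈ H then 1 else 0 := hH
    refine ⟨by simp [key, H.one_mem], ?_, ?_, ?_⟩
    · intro g; by_cases hg : g ∈ H <;> simp [key, hg]
    · intro g h
      by_cases hg : g ∈ H
      · by_cases hh : h ∈ H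
        · simp [key, hg, hh, H.mul_mem hg hh]
        · have : g * h ∉ H := fun hgh => hh (by simpa using H.mul_mem (H.inv_mem hg) hgh)
          simp [key, hg, hh, this]
      · simp [key, hg]
    · intro g h
      by_cases hg : g ∈ H
      · by_cases hh : h ∈ H
        · simp [key, hg, hh, H.mul_mem hg hh]
        · have : g * h ∉ H := fun hgh => hh (by simpa using H.mul_mem (H.inv_mem hg) hgh)
          simp [key, hg, hh, this]
      · simp [key, hg]
end

section
/- Let H be a bialgebra and A a left partial H-module algebra. Then the subspace A#H = (A⊗H)(1_A⊗1_H) of A⊗H, with the multiplication (a⊗h)(b⊗k) = a(h₍₁₎·b) ⊗ h₍₂₎k, is an associative unital algebra with unit 1_A # 1_H = (1₍₁₎·1_A) ⊗ 1₍₂₎ = 1_A ⊗ 1_H acting as two-sided identity on A#H. -/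
open TensorProduct

namespace SmashAux

variable {k H A : Type*} [CommRing k] [Ring H] [Bialgebra k H]
    [Ring A] [Algebra k A] (P : PartialModuleAlgebra k H A)

noncomputable def Phi : ((A ⊗[k] H) ⊗[k] (A ⊗[k] H)) →ₗ[k] A ⊗[k] H :=
  LinearMap.rTensor H (LinearMap.mul' k A) ∘ₗ
    (TensorProduct.assoc k A A H).symm.toLinearMap ∘ₗ
    LinearMap.lTensor A
      ((TensorProduct.map (TensorProduct.lift P.act) (LinearMap.mul' k H)) ∘ₗ
        (TensorProduct.tensorTensorTensorComm k H H A H).toLinearMap ∘ₗ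
        LinearMap.rTensor (A ⊗[k] H) (Coalgebra.comul (R := k) (A := H))) ∘ₗ
    (TensorProduct.assoc k A H (A ⊗[k] H)).toLinearMap

noncomputable def M : (A ⊗[k] H) →ₗ[k] (A ⊗[k] H) →ₗ[k] (A ⊗[k] H) :=
  TensorProduct.curry (Phi P)

lemma M_tmul (a b : A) (h g : H) :
    M P (a ⊗ₜ[k] h) (b ⊗ₜ[k] g) =
      (TensorProduct.map (LinearMap.mulLeft k a ∘ₗ P.act.flip b)
          (LinearMap.mulRight k g) ∘ₗ
        (Coalgebra.comul (R := k) (A := H))) h := by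
  have key : ∀ c : H ⊗[k] H,
      LinearMap.rTensor H (LinearMap.mul' k A)
        ((TensorProduct.assoc k A A H).symm
          (a ⊗ₜ[k] (TensorProduct.map (TensorProduct.lift P.act) (LinearMap.mul' k H)
            (TensorProduct.tensorTensorTensorComm k H H A H (c ⊗ₜ[k] (b ⊗ₜ[k] g)))))) =
      TensorProduct.map (LinearMap.mulLeft k a ∘ₗ P.act.flip b) (LinearMap.mulRight k g) c := by
    intro c
    induction c using TensorProduct.induction_on with
    | zero =>
        rw [zero_tmul, LinearEquiv.map_zero, LinearMap.map_zero, tmul_zero,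
          LinearEquiv.map_zero, LinearMap.map_zero, LinearMap.map_zero]
    | tmul x y =>
        simp [TensorProduct.tensorTensorTensorComm_tmul, TensorProduct.map_tmul,
          TensorProduct.assoc_symm_tmul, LinearMap.rTensor_tmul, LinearMap.mul'_apply]
    | add u v hu hv =>
        simp only [add_tmul, map_add, tmul_add] at *
        rw [hu, hv]
  simp only [M, Phi, TensorProduct.curry_apply, LinearMap.comp_apply, LinearEquiv.coe_coe,
    TensorProduct.assoc_tmul, LinearMap.lTensor_tmul, LinearMap.rTensor_tmul]
  exact key _


lemma M_one_left : ∀ x : A ⊗[k] H, M P ((1:A) ⊗ₜ[k] (1:H)) x = x := by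
  intro x
  induction x using TensorProduct.induction_on with
  | zero => simp
  | tmul b g =>
      rw [M_tmul]
      simp [Bialgebra.comul_one, Algebra.TensorProduct.one_def, P.pa1]
  | add u v hu hv => rw [map_add, hu, hv]

lemma xi (b c : A) (p : H) :
    LinearMap.mul' k A ∘ₗ
      TensorProduct.map (P.act.flip b) (P.act.flip c ∘ₗ LinearMap.mulRight k p) ∘ₗ
      (Coalgebra.comul (R := k) (A := H)) = P.act.flip (b * P.act p c) := by
  rw [← P.pa2 b (P.act p c), P.pa3 p c]
  set γ : H →ₗ[k] A := P.act.flip c ∘ₗ LinearMap.mulRight k p with hγ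
  set D3 : ((H ⊗[k] H) ⊗[k] H) →ₗ[k] A :=
    LinearMap.mul' k A ∘ₗ
      TensorProduct.map (LinearMap.mul' k A ∘ₗ TensorProduct.map (P.act.flip b) (P.act.flip 1)) γ
    with hD3
  have sub1 : ∀ (u : H) (z : H ⊗[k] H),
      P.act u b * (LinearMap.mul' k A) (TensorProduct.map (P.act.flip 1) γ z) =
        D3 ((TensorProduct.assoc k H H H).symm (u ⊗ₜ[k] z)) := by
    intro u z
    induction z using TensorProduct.induction_on with
    | zero => simp only [tmul_zero, LinearEquiv.map_zero, LinearMap.map_zero, mul_zero]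
    | tmul v w =>
        simp [hD3, TensorProduct.assoc_symm_tmul, LinearMap.mul'_apply, mul_assoc]
    | add z1 z2 h1 h2 => simp only [map_add, tmul_add, mul_add] at *; rw [h1, h2]
  have helper1 : ∀ w : H ⊗[k] H,
      (LinearMap.mul' k A) (TensorProduct.map (P.act.flip b)
          (LinearMap.mul' k A ∘ₗ TensorProduct.map (P.act.flip 1) γ ∘ₗ
            (Coalgebra.comul (R := k) (A := H))) w) =
        D3 ((TensorProduct.assoc k H H H).symm
          (LinearMap.lTensor H (Coalgebra.comul (R := k) (A := H)) w)) := by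
    intro w
    induction w using TensorProduct.induction_on with
    | zero => simp
    | tmul u v =>
        simp only [TensorProduct.map_tmul, LinearMap.comp_apply, LinearMap.lTensor_tmul]
        exact sub1 u _
    | add w1 w2 h1 h2 => simp only [map_add] at *; rw [h1, h2]
  have helper2 : ∀ w : H ⊗[k] H,
      D3 (LinearMap.rTensor H (Coalgebra.comul (R := k) (A := H)) w) =
        (LinearMap.mul' k A) (TensorProduct.map (P.act.flip b) γ w) := by
    intro w
    induction w using TensorProduct.induction_on with
    | zero => simp
    | tmul u v =>
        simp only [LinearMap.rTensor_tmul, hD3, LinearMap.comp_apply,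
          TensorProduct.map_tmul, LinearMap.mul'_apply]
        have : (LinearMap.mul' k A)
            (TensorProduct.map (P.act.flip b) (P.act.flip 1)
              ((Coalgebra.comul (R := k) (A := H)) u)) = P.act u b := by
          have := congrFun (congrArg DFunLike.coe (P.pa2 b 1)) u
          simpa [mul_one] using this
        rw [this]; rfl
    | add w1 w2 h1 h2 => simp only [map_add] at *; rw [h1, h2]
  apply LinearMap.ext; intro h₀
  simp only [LinearMap.comp_apply]
  rw [helper1, Coalgebra.coassoc_symm_apply, helper2]


lemma map_mul_pure (F : H →ₗ[k] A) (G' : H →ₗ[k] H) (p q : H) :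
    ∀ z : H ⊗[k] H,
      TensorProduct.map F G' (z * (p ⊗ₜ[k] q)) =
        TensorProduct.map (F ∘ₗ LinearMap.mulRight k p) (G' ∘ₗ LinearMap.mulRight k q) z := by
  intro z
  induction z using TensorProduct.induction_on with
  | zero => simp
  | tmul u v => simp [Algebra.TensorProduct.tmul_mul_tmul]
  | add z1 z2 h1 h2 => simp only [add_mul, map_add] at *; rw [h1, h2]

lemma M_assoc_tmul (a b c : A) (h g l : H) :
    M P (M P (a ⊗ₜ[k] h) (b ⊗ₜ[k] g)) (c ⊗ₜ[k] l) =
      M P (a ⊗ₜ[k] h) (M P (b ⊗ₜ[k] g) (c ⊗ₜ[k] l)) := by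
  obtain ⟨s, hs⟩ := TensorProduct.exists_finset (Coalgebra.comul (R := k) (A := H) h)
  have main : ∀ G : H ⊗[k] H,
      (∑ i ∈ s, (TensorProduct.map
          (LinearMap.mulLeft k (a * P.act i.1 b) ∘ₗ P.act.flip c)
          (LinearMap.mulRight k l)) (Coalgebra.comul (R := k) (A := H) i.2 * G))
      = M P (a ⊗ₜ[k] h)
          ((TensorProduct.map (LinearMap.mulLeft k b ∘ₗ P.act.flip c)
            (LinearMap.mulRight k l)) G) := by
    intro G
    induction G using TensorProduct.induction_on with
    | zero => simp
    | add u v hu hv =>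
        simp only [mul_add, map_add, Finset.sum_add_distrib] at *
        rw [hu, hv]
    | tmul p q =>
      -- RHS computation
      rw [TensorProduct.map_tmul, M_tmul]
      simp only [LinearMap.comp_apply, LinearMap.mulLeft_apply, LinearMap.mulRight_apply, hs,
        map_sum]
      -- now RHS is a sum over s
      set J : (H ⊗[k] H) →ₗ[k] A :=
        LinearMap.mulLeft k a ∘ₗ LinearMap.mul' k A ∘ₗ
          TensorProduct.map (P.act.flip b) (P.act.flip c ∘ₗ LinearMap.mulRight k p) with hJ
      set G0 : H →ₗ[k] H := LinearMap.mulRight k (q * l) with hG0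
      have Wlem : ∀ (u : H) (Z : H ⊗[k] H),
          (TensorProduct.map J G0) ((TensorProduct.assoc k H H H).symm (u ⊗ₜ[k] Z)) =
            (TensorProduct.map
              (LinearMap.mulLeft k (a * P.act u b) ∘ₗ P.act.flip c ∘ₗ LinearMap.mulRight k p)
              G0) Z := by
        intro u Z
        induction Z using TensorProduct.induction_on with
        | zero => simp only [tmul_zero, LinearEquiv.map_zero, LinearMap.map_zero]
        | tmul v w =>
            simp [hJ, TensorProduct.assoc_symm_tmul, LinearMap.mul'_apply, mul_assoc]
        | add z1 z2 h1 h2 => simp only [tmul_add, map_add] at *; rw [h1, h2]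
      -- LHS computation
      calc
        ∑ i ∈ s, (TensorProduct.map
            (LinearMap.mulLeft k (a * P.act i.1 b) ∘ₗ P.act.flip c)
            (LinearMap.mulRight k l))
              (Coalgebra.comul (R := k) (A := H) i.2 * (p ⊗ₜ[k] q))
            = ∑ i ∈ s, (TensorProduct.map
                (LinearMap.mulLeft k (a * P.act i.1 b) ∘ₗ P.act.flip c ∘ₗ
                  LinearMap.mulRight k p) G0)
                  (Coalgebra.comul (R := k) (A := H) i.2) := by
              refine Finset.sum_congr rfl fun i _ => ?_
              have e2 : LinearMap.mulRight k l ∘ₗ LinearMap.mulRight k q = G0 := by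
                ext w; simp [hG0, mul_assoc]
              rw [map_mul_pure, e2, LinearMap.comp_assoc]
        _ = ∑ i ∈ s, (TensorProduct.map J G0) ((TensorProduct.assoc k H H H).symm
              (i.1 ⊗ₜ[k] Coalgebra.comul (R := k) (A := H) i.2)) := by
              refine Finset.sum_congr rfl fun i _ => ?_
              rw [Wlem]
        _ = (TensorProduct.map J G0) ((TensorProduct.assoc k H H H).symm
              (LinearMap.lTensor H (Coalgebra.comul (R := k) (A := H))
                (Coalgebra.comul (R := k) (A := H) h))) := by
              rw [hs, map_sum, map_sum, map_sum]
              refine Finset.sum_congr rfl fun i _ => ?_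
              rw [LinearMap.lTensor_tmul]
        _ = (TensorProduct.map J G0)
              (LinearMap.rTensor H (Coalgebra.comul (R := k) (A := H))
                (Coalgebra.comul (R := k) (A := H) h)) := by
              rw [Coalgebra.coassoc_symm_apply]
        _ = ∑ i ∈ s, (a * P.act i.1 (b * P.act p c)) ⊗ₜ[k] (i.2 * (q * l)) := by
              rw [hs, map_sum, map_sum]
              refine Finset.sum_congr rfl fun i _ => ?_
              rw [LinearMap.rTensor_tmul, TensorProduct.map_tmul]
              congr 1
              · have := congrFun (congrArg DFunLike.coe (xi P b c p)) i.1
                simp only [LinearMap.comp_apply] at this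
                simp only [hJ, LinearMap.comp_apply, LinearMap.mulLeft_apply]
                rw [this]; rfl
  -- assemble
  rw [M_tmul P b c g l, M_tmul P a b h g]
  simp only [LinearMap.comp_apply]
  rw [hs]
  simp only [map_sum, LinearMap.sum_apply, TensorProduct.map_tmul, LinearMap.comp_apply,
    LinearMap.mulLeft_apply, LinearMap.mulRight_apply]
  have lhs_eq : ∀ i : H × H,
      M P ((a * P.act i.1 b) ⊗ₜ[k] (i.2 * g)) (c ⊗ₜ[k] l) =
        (TensorProduct.map (LinearMap.mulLeft k (a * P.act i.1 b) ∘ₗ P.act.flip c)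
          (LinearMap.mulRight k l))
            (Coalgebra.comul (R := k) (A := H) i.2 * Coalgebra.comul (R := k) (A := H) g) := by
    intro i
    rw [M_tmul]
    simp only [LinearMap.comp_apply, Bialgebra.comul_mul]
  calc
    ∑ i ∈ s, (M P) ((a * (P.act i.1) b) ⊗ₜ[k] (i.2 * g)) (c ⊗ₜ[k] l)
        = ∑ i ∈ s, (TensorProduct.map (LinearMap.mulLeft k (a * P.act i.1 b) ∘ₗ P.act.flip c)
            (LinearMap.mulRight k l))
            (Coalgebra.comul (R := k) (A := H) i.2 * Coalgebra.comul (R := k) (A := H) g) :=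
          Finset.sum_congr rfl fun i _ => lhs_eq i
    _ = _ := main (Coalgebra.comul (R := k) (A := H) g)


lemma M_assoc : ∀ x y z : A ⊗[k] H, M P (M P x y) z = M P x (M P y z) := by
  intro x y z
  induction x using TensorProduct.induction_on with
  | zero => simp
  | add x1 x2 h1 h2 => simp only [map_add, LinearMap.add_apply] at *; rw [h1, h2]
  | tmul a h =>
    induction y using TensorProduct.induction_on with
    | zero => simp
    | add y1 y2 h1 h2 => simp only [map_add, LinearMap.add_apply] at *; rw [h1, h2]
    | tmul b g =>
      induction z using TensorProduct.induction_on with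
      | zero => simp
      | add z1 z2 h1 h2 => simp only [map_add, LinearMap.add_apply] at *; rw [h1, h2]
      | tmul c l => exact M_assoc_tmul P a b c h g l

end SmashAux

/-- The partial smash product: on `A ⊗ H` the product
`(a⊗h)(b⊗g) = a(h₁·b) ⊗ h₂g` is bilinear, and the subspace
`A#H = (A⊗H)(1_A⊗1_H)` is an associative unital algebra with unit
`1_A # 1_H = (1₁·1_A)⊗1₂ = 1_A ⊗ 1_H` acting as a two-sided identity. -/
theorem stmt16 {k H A : Type*} [CommRing k] [Ring H] [Bialgebra k H]
    [Ring A] [Algebra k A] (P : PartialModuleAlgebra k H A) :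
    ∃ M : (A ⊗[k] H) →ₗ[k] (A ⊗[k] H) →ₗ[k] (A ⊗[k] H),
      -- the multiplication formula `(a⊗h)(b⊗g) = a(h₁·b) ⊗ h₂g`:
      (∀ (a b : A) (h g : H),
        M (a ⊗ₜ[k] h) (b ⊗ₜ[k] g) =
          (TensorProduct.map (LinearMap.mulLeft k a ∘ₗ P.act.flip b)
              (LinearMap.mulRight k g) ∘ₗ
            (Coalgebra.comul (R := k) (A := H))) h) ∧
      -- `1_A # 1_H = (1₁·1_A) ⊗ 1₂ = 1_A ⊗ 1_H`:
      (M ((1 : A) ⊗ₜ[k] (1 : H)) ((1 : A) ⊗ₜ[k] (1 : H)) =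
        (1 : A) ⊗ₜ[k] (1 : H)) ∧
      -- the subspace `A#H = (A⊗H)(1_A⊗1_H)` is closed under multiplication:
      (∀ x ∈ LinearMap.range (M.flip ((1 : A) ⊗ₜ[k] (1 : H))),
        ∀ y ∈ LinearMap.range (M.flip ((1 : A) ⊗ₜ[k] (1 : H))),
          M x y ∈ LinearMap.range (M.flip ((1 : A) ⊗ₜ[k] (1 : H)))) ∧
      -- associativity on `A#H`:
      (∀ x ∈ LinearMap.range (M.flip ((1 : A) ⊗ₜ[k] (1 : H))),
        ∀ y ∈ LinearMap.range (M.flip ((1 : A) ⊗ₜ[k] (1 : H))),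
          ∀ z ∈ LinearMap.range (M.flip ((1 : A) ⊗ₜ[k] (1 : H))),
            M (M x y) z = M x (M y z)) ∧
      -- the unit belongs to `A#H`:
      ((1 : A) ⊗ₜ[k] (1 : H) ∈
        LinearMap.range (M.flip ((1 : A) ⊗ₜ[k] (1 : H)))) ∧
      -- `1_A # 1_H` is a two-sided identity on `A#H`:
      (∀ x ∈ LinearMap.range (M.flip ((1 : A) ⊗ₜ[k] (1 : H))),
        M ((1 : A) ⊗ₜ[k] (1 : H)) x = x ∧ M x ((1 : A) ⊗ₜ[k] (1 : H)) = x) := by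
  
  classical
  refine ⟨SmashAux.M P, SmashAux.M_tmul P, ?_, ?_, ?_, ?_, ?_⟩
  · exact SmashAux.M_one_left P _
  · rintro x ⟨v, rfl⟩ y ⟨w, rfl⟩
    refine ⟨SmashAux.M P ((SmashAux.M P).flip ((1 : A) ⊗ₜ[k] (1 : H)) v) w, ?_⟩
    simp only [LinearMap.flip_apply]
    rw [SmashAux.M_assoc]
  · intro x _ y _ z _
    exact SmashAux.M_assoc P x y z
  · exact ⟨(1 : A) ⊗ₜ[k] (1 : H), SmashAux.M_one_left P _⟩
  · rintro x ⟨v, rfl⟩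
    simp only [LinearMap.flip_apply]
    refine ⟨SmashAux.M_one_left P _, ?_⟩
    rw [SmashAux.M_assoc, SmashAux.M_one_left P ((1 : A) ⊗ₜ[k] (1 : H))]
end

section
/- Let π : G → S be a partial representation of a group G in a monoid S, i.e., π(e) = 1, π(g)π(h)π(h⁻¹) = π(gh)π(h⁻¹), and π(g⁻¹)π(g)π(h) = π(g⁻¹)π(gh) for all g,h ∈ G. Then π(g)π(g⁻¹)π(g) = π(g) for all g ∈ G, and the elements ε_g = π(g)π(g⁻¹) are commuting idempotents satisfying π(g)ε_h = ε_{gh}π(g). -/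
/-- For a partial representation `π : G → S` of a group in a monoid `S`:
`π(g)π(g⁻¹)π(g) = π(g)`, the elements `ε_g = π(g)π(g⁻¹)` are commuting
idempotents, and `π(g)ε_h = ε_{gh}π(g)`. -/
theorem stmt17 {G S : Type*} [Group G] [Monoid S] (π : G → S)
    (h1 : π 1 = 1)
    (h2 : ∀ g h : G, π g * π h * π h⁻¹ = π (g * h) * π h⁻¹)
    (h3 : ∀ g h : G, π g⁻¹ * π g * π h = π g⁻¹ * π (g * h)) :
    (∀ g : G, π g * π g⁻¹ * π g = π g) ∧
    (∀ g : G, (π g * π g⁻¹) * (π g * π g⁻¹) = π g * π g⁻¹) ∧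
    (∀ g h : G, (π g * π g⁻¹) * (π h * π h⁻¹) = (π h * π h⁻¹) * (π g * π g⁻¹)) ∧
    (∀ g h : G, π g * (π h * π h⁻¹) = (π (g * h) * π (g * h)⁻¹) * π g) := by
  have p1 : ∀ g : G, π g * π g⁻¹ * π g = π g := by
    intro g
    have := h2 g g⁻¹
    simpa [h1] using this
  have p4 : ∀ g h : G, π g * (π h * π h⁻¹) = (π (g * h) * π (g * h)⁻¹) * π g := by
    intro g h
    have e2 := h3 (g * h)⁻¹ g
    rw [inv_inv, show (g * h)⁻¹ * g = h⁻¹ by group] at e2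
    calc π g * (π h * π h⁻¹) = π g * π h * π h⁻¹ := by rw [mul_assoc]
      _ = π (g * h) * π h⁻¹ := h2 g h
      _ = π (g * h) * π (g * h)⁻¹ * π g := e2.symm
      _ = (π (g * h) * π (g * h)⁻¹) * π g := rfl
  have p2 : ∀ g : G, (π g * π g⁻¹) * (π g * π g⁻¹) = π g * π g⁻¹ := by
    intro g
    calc (π g * π g⁻¹) * (π g * π g⁻¹) = (π g * π g⁻¹ * π g) * π g⁻¹ := by
          rw [mul_assoc, mul_assoc, mul_assoc]
      _ = π g * π g⁻¹ := by rw [p1 g]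
  refine ⟨p1, p2, ?_, p4⟩
  intro g h
  have A := p4 g⁻¹ h
  have B := p4 g (g⁻¹ * h)
  rw [show g * (g⁻¹ * h) = h by group] at B
  calc (π g * π g⁻¹) * (π h * π h⁻¹)
      = π g * (π g⁻¹ * (π h * π h⁻¹)) := by rw [mul_assoc]
    _ = π g * ((π (g⁻¹ * h) * π (g⁻¹ * h)⁻¹) * π g⁻¹) := by rw [A]
    _ = (π g * (π (g⁻¹ * h) * π (g⁻¹ * h)⁻¹)) * π g⁻¹ := by simp [mul_assoc]
    _ = ((π h * π h⁻¹) * π g) * π g⁻¹ := by rw [B]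
    _ = (π h * π h⁻¹) * (π g * π g⁻¹) := by rw [mul_assoc]
end

section
/- Let k be a field of characteristic ≠ 2 and H = (kC₂)* the dual of the group algebra of the cyclic group of order 2, with basis {p_e, p_g} of orthogonal idempotents. Then the universal partial representation algebra H_par is isomorphic to the 3-dimensional commutative algebra k[x]/⟨x(2x-1)(x-1)⟩, where x corresponds to the class [p_e]. -/
/-- The generator of the tensor algebra `T(H)` corresponding to the basis
idempotent `p_e` of `H = (kC₂)*`. -/
noncomputable def pe (k : Type*) [Field k] : FreeAlgebra k Bool :=
  FreeAlgebra.ι k true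

/-- The generator of the tensor algebra `T(H)` corresponding to the basis
idempotent `p_g` of `H = (kC₂)*`. -/
noncomputable def pg (k : Type*) [Field k] : FreeAlgebra k Bool :=
  FreeAlgebra.ι k false

/-- The defining relations of `H_par` for `H = (kC₂)*`, obtained by
evaluating the relations `[1_H] = 1`, `[h][k₁][S(k₂)] = [hk₁][S(k₂)]` and
`[h₁][S(h₂)][k] = [h₁][S(h₂)k]` on the basis `{p_e, p_g}` (here `S = id`,
`Δ(p_e) = p_e⊗p_e + p_g⊗p_g`, `Δ(p_g) = p_e⊗p_g + p_g⊗p_e`, `1_H = p_e+p_g`,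
`p_e² = p_e`, `p_g² = p_g`, `p_ep_g = 0`; the remaining two families of
relations coincide with these since `H` is commutative and cocommutative). -/
inductive HparRel (k : Type*) [Field k] :
    FreeAlgebra k Bool → FreeAlgebra k Bool → Prop
  | unit : HparRel k (pe k + pg k) 1
  | r2ee : HparRel k (pe k * pe k * pe k + pe k * pg k * pg k) (pe k * pe k)
  | r2eg : HparRel k (pe k * pe k * pg k + pe k * pg k * pe k) (pe k * pg k)
  | r2ge : HparRel k (pg k * pe k * pe k + pg k * pg k * pg k) (pg k * pg k)
  | r2gg : HparRel k (pg k * pe k * pg k + pg k * pg k * pe k) (pg k * pe k)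
  | r3ee : HparRel k (pe k * pe k * pe k + pg k * pg k * pe k) (pe k * pe k)
  | r3eg : HparRel k (pe k * pe k * pg k + pg k * pg k * pg k) (pg k * pg k)
  | r3ge : HparRel k (pe k * pg k * pe k + pg k * pe k * pe k) (pg k * pe k)
  | r3gg : HparRel k (pe k * pg k * pg k + pg k * pe k * pg k) (pe k * pg k)

/-!
In `H_par` the relation `[p_e] + [p_g] = 1` gives `[p_g] = 1 - [p_e]`, so `H_par` is generated by
`a = [p_e]`, and the relation `[p_e][p_e][p_e] + [p_e][p_g][p_g] = [p_e][p_e]` becomes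
`a (2a - 1) (a - 1) = 0`. Conversely, `p_e ↦ x`, `p_g ↦ 1 - x` respects all the relations in
`k[x]/⟨x(2x-1)(x-1)⟩`, and the two maps are mutually inverse on generators.
-/

open Polynomial

noncomputable abbrev hparCubic (k : Type*) [Field k] : k[X] :=
  X * (2 * X - 1) * (X - 1)

theorem mul_two_mul_sub_one_mul_sub_one_eq_zero {R : Type*} [Ring R] {a b : R}
    (hab : a + b = 1) (h : a * a * a + a * b * b = a * a) :
    a * (2 * a - 1) * (a - 1) = 0 := by
  obtain rfl : b = 1 - a := eq_sub_of_add_eq' hab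
  calc a * (2 * a - 1) * (a - 1)
      = (a * a * a + a * (1 - a) * (1 - a)) - a * a := by noncomm_ring
    _ = 0 := by rw [h, sub_self]

namespace Hpar

variable (k : Type*) [Field k]

noncomputable def freeToAdjoinRoot : FreeAlgebra k Bool →ₐ[k] AdjoinRoot (hparCubic k) :=
  FreeAlgebra.lift k fun b => if b then AdjoinRoot.root _ else 1 - AdjoinRoot.root _

theorem freeToAdjoinRoot_rel ⦃x y : FreeAlgebra k Bool⦄ (h : HparRel k x y) :
    freeToAdjoinRoot k x = freeToAdjoinRoot k y := by
  have hroot : AdjoinRoot.root (hparCubic k) * (2 * AdjoinRoot.root (hparCubic k) - 1) *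
      (AdjoinRoot.root (hparCubic k) - 1) = 0 := by
    simpa only [hparCubic, map_mul, map_sub, map_one, map_ofNat, AdjoinRoot.mk_X] using
      AdjoinRoot.mk_self (f := hparCubic k)
  -- in the commutative target each relation is an identity or a multiple of the cubic
  induction h <;>
    simp only [freeToAdjoinRoot, pe, pg, map_add, map_mul, map_one, FreeAlgebra.lift_ι_apply,
      Bool.false_eq_true, reduceIte] <;>
    first
    | ring1
    | linear_combination hroot
    | linear_combination -hroot

noncomputable def toAdjoinRoot : RingQuot (HparRel k) →ₐ[k] AdjoinRoot (hparCubic k) :=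
  RingQuot.liftAlgHom k ⟨freeToAdjoinRoot k, freeToAdjoinRoot_rel k⟩

theorem toAdjoinRoot_mk_pe :
    toAdjoinRoot k (RingQuot.mkAlgHom k (HparRel k) (pe k)) = AdjoinRoot.root _ := by
  simp [toAdjoinRoot, freeToAdjoinRoot, pe]

theorem toAdjoinRoot_mk_pg :
    toAdjoinRoot k (RingQuot.mkAlgHom k (HparRel k) (pg k)) = 1 - AdjoinRoot.root _ := by
  simp [toAdjoinRoot, freeToAdjoinRoot, pg]

theorem mk_pe_add_mk_pg :
    RingQuot.mkAlgHom k (HparRel k) (pe k) + RingQuot.mkAlgHom k (HparRel k) (pg k) = 1 := by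
  simpa using RingQuot.mkAlgHom_rel k (HparRel.unit (k := k))

theorem aeval_mk_pe_hparCubic :
    aeval (RingQuot.mkAlgHom k (HparRel k) (pe k)) (hparCubic k) = 0 := by
  have h := RingQuot.mkAlgHom_rel k (HparRel.r2ee (k := k))
  simp only [map_add, map_mul] at h
  simpa [hparCubic, map_ofNat] using
    mul_two_mul_sub_one_mul_sub_one_eq_zero (mk_pe_add_mk_pg k) h

noncomputable def ofAdjoinRoot : AdjoinRoot (hparCubic k) →ₐ[k] RingQuot (HparRel k) :=
  Ideal.Quotient.liftₐ _ (aeval (RingQuot.mkAlgHom k (HparRel k) (pe k))) fun p hp => by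
    obtain ⟨q, rfl⟩ := Ideal.mem_span_singleton'.mp hp
    rw [map_mul, aeval_mk_pe_hparCubic, mul_zero]

theorem ofAdjoinRoot_root :
    ofAdjoinRoot k (AdjoinRoot.root _) = RingQuot.mkAlgHom k (HparRel k) (pe k) :=
  aeval_X _

theorem toAdjoinRoot_comp_ofAdjoinRoot : (toAdjoinRoot k).comp (ofAdjoinRoot k) = .id k _ :=
  AdjoinRoot.algHom_ext <| by simp [ofAdjoinRoot_root, toAdjoinRoot_mk_pe]

theorem ofAdjoinRoot_comp_toAdjoinRoot : (ofAdjoinRoot k).comp (toAdjoinRoot k) = .id k _ := by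
  apply RingQuot.ringQuot_ext'
  refine FreeAlgebra.hom_ext (funext fun b => ?_)
  cases b
  · change ofAdjoinRoot k (toAdjoinRoot k (RingQuot.mkAlgHom k (HparRel k) (pg k))) = _
    rw [toAdjoinRoot_mk_pg, map_sub, map_one, ofAdjoinRoot_root,
      ← eq_sub_of_add_eq' (mk_pe_add_mk_pg k)]
    rfl
  · change ofAdjoinRoot k (toAdjoinRoot k (RingQuot.mkAlgHom k (HparRel k) (pe k))) = _
    rw [toAdjoinRoot_mk_pe, ofAdjoinRoot_root]
    rfl

end Hpar

theorem stmt19_general (k : Type*) [Field k] :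
    ∃ φ : RingQuot (HparRel k) ≃ₐ[k]
        AdjoinRoot (Polynomial.X * (2 * Polynomial.X - 1) *
          (Polynomial.X - 1) : Polynomial k),
      φ (RingQuot.mkAlgHom k (HparRel k) (pe k)) =
        AdjoinRoot.root (Polynomial.X * (2 * Polynomial.X - 1) *
          (Polynomial.X - 1) : Polynomial k) :=
  ⟨AlgEquiv.ofAlgHom (Hpar.toAdjoinRoot k) (Hpar.ofAdjoinRoot k)
      (Hpar.toAdjoinRoot_comp_ofAdjoinRoot k) (Hpar.ofAdjoinRoot_comp_toAdjoinRoot k),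
    Hpar.toAdjoinRoot_mk_pe k⟩

/-- For `k` of characteristic `≠ 2` and `H = (kC₂)*`, the universal partial
representation algebra `H_par` (the quotient of `T(H)` by the partial
representation relations) is isomorphic to the 3-dimensional commutative
algebra `k[x]/⟨x(2x-1)(x-1)⟩`, with `x` corresponding to the class `[p_e]`. -/
theorem stmt19 (k : Type*) [Field k] (hchar : (2 : k) ≠ 0) :
    ∃ φ : RingQuot (HparRel k) ≃ₐ[k]
        AdjoinRoot (Polynomial.X * (2 * Polynomial.X - 1) *
          (Polynomial.X - 1) : Polynomial k),
      φ (RingQuot.mkAlgHom k (HparRel k) (pe k)) =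
        AdjoinRoot.root (Polynomial.X * (2 * Polynomial.X - 1) *
          (Polynomial.X - 1) : Polynomial k) :=
  stmt19_general k
end
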